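/- arXiv:1506.07945 — 2 statements merged into one kernel-verified Lean document; each statement's English description precedes it below -/
import Mathlib

section
/- Let N be a positive integer and n = 2^N - 1. Then for all q in ℚ with q^i ≠ -1 for 0 ≤ i ≤ N-1, ∑_{m=0}^{n} s(m)·q^{z_n(m)} = 2·(1+q)⋯(1+q^{N-1})·∑_{j=0}^{N-1} 1/(1+q^j). -/
/-- Binary sum-of-digits function. -/
def sdig (m : ℕ) : ℕ := (Nat.digits 2 m).sum

/-- The `i`-th digit of `m` in base `b`. -/
def dig (b m i : ℕ) : ℕ := m / b ^ i % b

/-- `z_n(m) = ∑_{k=0}^{N-1} k·(1 - δ(n_k, m_k))`, the weighted count of positions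
among the `N` lowest binary digits at which `m` and `n` differ. -/
def zfun (N n m : ℕ) : ℕ :=
  ∑ k ∈ Finset.range N, k * (1 - if dig 2 n k = dig 2 m k then 1 else 0)

/-! With `n = 2^N - 1`, `z_n(m)` is the sum of the positions of the zero digits of `m`, so
`∑_m t^{s(m)} q^{z_n(m)}` factors digit by digit as `∏_{k<N} (q^k + t)`. The sum in question is
the derivative of this product at `t = 1`, which by the product rule is `∑_j ∏_{k ≠ j} (1 + q^k)`;
the factor `2` is `1 + q^0`. -/

open Finset

theorem sum_range_pow_prod_dig {R : Type*} [CommSemiring R] (b N : ℕ) (w : ℕ → ℕ → R) :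
    ∑ m ∈ range (b ^ N), ∏ k ∈ range N, w k (dig b m k) =
      ∏ k ∈ range N, ∑ d ∈ range b, w k d := by
  have hdig (f : Fin N → Fin b) (k : Fin N) : dig b (finFunctionFinEquiv f) k = f k := by
    rw [dig, ← finFunctionFinEquiv_symm_apply_val, Equiv.symm_apply_apply]
  rw [← Fin.sum_univ_eq_sum_range, ← finFunctionFinEquiv.sum_comp, ← Fin.prod_univ_eq_prod_range]
  simp only [← Fin.prod_univ_eq_prod_range (fun k => w k (dig b _ k)), hdig,
    ← Fin.sum_univ_eq_sum_range, Fintype.prod_sum]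

theorem sum_range_pow_sum_mul_prod_dig {R : Type*} [CommSemiring R] (b N : ℕ)
    (g w : ℕ → ℕ → R) :
    ∑ m ∈ range (b ^ N), (∑ j ∈ range N, g j (dig b m j)) * ∏ k ∈ range N, w k (dig b m k) =
      ∑ j ∈ range N, (∑ d ∈ range b, g j d * w j d) *
        ∏ k ∈ (range N).erase j, ∑ d ∈ range b, w k d := by
  simp only [sum_mul]
  rw [sum_comm]
  refine sum_congr rfl fun j hj => ?_
  have prod_ite (v c : ℕ → R) :
      ∏ k ∈ range N, (if k = j then v k else c k) = v j * ∏ k ∈ (range N).erase j, c k := by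
    rw [← mul_prod_erase _ _ hj, if_pos rfl]
    exact congrArg _ (prod_congr rfl fun k hk => if_neg (ne_of_mem_erase hk))
  -- the `j`-th summand is the digitwise sum for the weights `w` with `w j` replaced by `g j * w j`
  have hfactor := sum_range_pow_prod_dig b N fun k d => if k = j then g k d * w k d else w k d
  simp only [sum_ite_irrel, prod_ite, ← mul_prod_erase _ _ hj, sum_mul, mul_assoc] at hfactor ⊢
  exact hfactor

theorem digits_sum_eq_sum_dig {b : ℕ} (hb : 1 < b) {N m : ℕ} (hm : m < b ^ N) :
    (Nat.digits b m).sum = ∑ k ∈ range N, dig b m k := by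
  induction N generalizing m with
  | zero => simp_all
  | succ N ih =>
    rcases m.eq_zero_or_pos with rfl | hpos
    · simp [dig]
    rw [Nat.digits_def' hb hpos, List.sum_cons, sum_range_succ',
      ih (Nat.div_lt_of_lt_mul (by rwa [← pow_succ']))]
    simp [dig, pow_succ', Nat.div_div_eq_div_mul, add_comm]

theorem dig_two_pow_sub_one {N k : ℕ} (hk : k < N) : dig 2 (2 ^ N - 1) k = 1 := by
  have := Nat.testBit_two_pow_sub_one N k
  rw [Nat.testBit_eq_decide_div_mod_eq] at this
  simpa [dig, hk] using this

theorem zfun_two_pow_sub_one (N m : ℕ) :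
    zfun N (2 ^ N - 1) m = ∑ k ∈ range N, k * (1 - dig 2 m k) := by
  refine sum_congr rfl fun k hk => ?_
  rw [dig_two_pow_sub_one (mem_range.mp hk)]
  have : dig 2 m k < 2 := Nat.mod_lt _ two_pos
  interval_cases dig 2 m k <;> rfl

theorem sum_sdig_mul_pow_zfun_eq_sum_prod_erase {R : Type*} [CommSemiring R] (N : ℕ) (q : R) :
    ∑ m ∈ range (2 ^ N), (sdig m : R) * q ^ zfun N (2 ^ N - 1) m =
      ∑ j ∈ range N, ∏ k ∈ (range N).erase j, (1 + q ^ k) := by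
  have hterm : ∀ m ∈ range (2 ^ N), (sdig m : R) * q ^ zfun N (2 ^ N - 1) m =
      (∑ j ∈ range N, (dig 2 m j : R)) * ∏ k ∈ range N, q ^ (k * (1 - dig 2 m k)) := by
    intro m hm
    rw [sdig, digits_sum_eq_sum_dig one_lt_two (mem_range.mp hm), zfun_two_pow_sub_one,
      prod_pow_eq_pow_sum, Nat.cast_sum]
  rw [sum_congr rfl hterm,
    sum_range_pow_sum_mul_prod_dig 2 N (fun _ d => (d : R)) fun k d => q ^ (k * (1 - d))]
  simp [sum_range_succ, add_comm]

/-- `∑_{m=0}^{2^N-1} s(m) q^{z_n(m)} = 2(1+q)⋯(1+q^{N-1})·∑_{j=0}^{N-1} 1/(1+q^j)`. -/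
theorem sum_sdig_q_pow_zfun (N : ℕ) (hN : 0 < N) (n : ℕ) (hn : n = 2 ^ N - 1)
    (q : ℚ) (hq : ∀ i, i ≤ N - 1 → q ^ i ≠ -1) :
    (∑ m ∈ Finset.range (n + 1), (sdig m : ℚ) * q ^ zfun N n m) =
      2 * (∏ i ∈ Finset.Ico 1 N, (1 + q ^ i)) *
        ∑ j ∈ Finset.range N, 1 / (1 + q ^ j) := by
  have hq_ne : ∀ j ∈ range N, 1 + q ^ j ≠ 0 := fun j hj h =>
    hq j (by have := mem_range.mp hj; omega) (eq_neg_of_add_eq_zero_right h)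
  have hprod : ∏ k ∈ range N, (1 + q ^ k) = 2 * ∏ i ∈ Ico 1 N, (1 + q ^ i) := by
    rw [range_eq_Ico, prod_eq_prod_Ico_succ_bot hN, pow_zero, one_add_one_eq_two]
  subst hn
  rw [Nat.sub_add_cancel Nat.one_le_two_pow, sum_sdig_mul_pow_zfun_eq_sum_prod_erase, ← hprod,
    mul_sum]
  refine sum_congr rfl fun j hj => ?_
  rw [← mul_prod_erase _ _ hj]
  field_simp [hq_ne j hj]
end

section
/- Let b ≥ 2 and N ≥ 0 be integers. The multivariable Sierpiński matrix satisfies the recurrence S_{b,N+1}(x_0,…,x_N; r_0,…,r_N) = S_{b,1}(x_N, r_N) ⊗ S_{b,N}(x_0,…,x_{N-1}; r_0,…,r_{N-1}), where ⊗ denotes the Kronecker (tensor) product of matrices and S_{b,1}(x,r) is the b×b lower-triangular matrix with (j,k)-entry B(x; r; j-k) for 0 ≤ k ≤ j ≤ b-1 and 0 otherwise. -/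
open scoped Classical

/-- The generalized binomial coefficient `B(x; r; d) = x(x+r)(x+2r)⋯(x+(d-1)r)/d!`. -/
def genBinom (x r : ℚ) (d : ℕ) : ℚ :=
  (∏ i ∈ Finset.range d, (x + i * r)) / (Nat.factorial d)

/-- The `N`-variable Sierpiński matrix `S_{b,N}(x₀,…,x_{N-1}; r₀,…,r_{N-1})`:
the `b^N × b^N` matrix whose `(j,k)`-entry is `∏_{i<N} B(xᵢ; rᵢ; dᵢ)` when `k ≤ j` and
`k ⪯_b j` (each base-`b` digit of `k` is at most the corresponding digit of `j`),
where `dᵢ` are the base-`b` digits of `j - k`, and `0` otherwise. -/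
noncomputable def Sierp (b N : ℕ) (x r : ℕ → ℚ) : Matrix (Fin (b ^ N)) (Fin (b ^ N)) ℚ :=
  fun j k =>
    if (k : ℕ) ≤ (j : ℕ) ∧ ∀ i, dig b (k : ℕ) i ≤ dig b (j : ℕ) i then
      ∏ i ∈ Finset.range N, genBinom (x i) (r i) (dig b ((j : ℕ) - (k : ℕ)) i)
    else 0

/-- The one-variable `b × b` Sierpiński matrix `S_{b,1}(x, r)`, a lower-triangular
matrix with `(j,k)`-entry `B(x; r; j-k)` for `k ≤ j`, and `0` otherwise. -/
def Sierp1 (b : ℕ) (x r : ℚ) : Matrix (Fin b) (Fin b) ℚ :=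
  fun j k => if (k : ℕ) ≤ (j : ℕ) then genBinom x r ((j : ℕ) - (k : ℕ)) else 0

/-!
An index of `S_{b,N+1}` is `j + b^N p` with `j < b^N` and `p < b`, and its base-`b` digits are
those of `j` followed by the single digit `p`. Hence `k + b^N q ⪯_b j + b^N p` iff `q ≤ p` and
`k ⪯_b j`, and then the difference `(j - k) + b^N (p - q)` has the digits of `j - k` followed by
`p - q`: the product over `N + 1` digits splits off the factor `B(x_N; r_N; p - q)`, which is the
`(p, q)` entry of `S_{b,1}(x_N, r_N)`. For `b ≥ 2` digitwise domination implies `k ≤ j`, so the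
order condition in the definition of `Sierp` may be dropped.
-/

lemma dig_zero (b m : ℕ) : dig b m 0 = m % b := by simp [dig]

lemma dig_succ (b m i : ℕ) : dig b m (i + 1) = dig b (m / b) i := by
  simp [dig, Nat.div_div_eq_div_mul, pow_succ']

lemma dig_eq_zero_of_lt_pow {b m i : ℕ} (h : m < b ^ i) : dig b m i = 0 := by
  simp [dig, Nat.div_eq_of_lt h]

lemma dig_add_pow_mul_of_lt {b N i : ℕ} (m a : ℕ) (hi : i < N) :
    dig b (m + b ^ N * a) i = dig b m i := by
  rcases Nat.eq_zero_or_pos b with rfl | hb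
  · simp [zero_pow (by omega : N ≠ 0)]
  obtain ⟨c, hc⟩ : b ^ (i + 1) ∣ b ^ N := pow_dvd_pow b hi
  rw [dig, dig, hc, pow_succ, mul_assoc, mul_assoc, Nat.add_mul_div_left _ _ (pow_pos hb i),
    Nat.add_mul_mod_self_left]

lemma dig_add_pow_mul_self {b N m a : ℕ} (hm : m < b ^ N) (ha : a < b) :
    dig b (m + b ^ N * a) N = a := by
  rw [dig, Nat.add_mul_div_left _ _ (by omega), Nat.div_eq_of_lt hm, zero_add, Nat.mod_eq_of_lt ha]

lemma le_of_forall_dig_le {b : ℕ} (hb : 1 < b) {k j : ℕ} (h : ∀ i, dig b k i ≤ dig b j i) :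
    k ≤ j := by
  induction k using Nat.strong_induction_on generalizing j with
  | _ k ih =>
    rcases Nat.eq_zero_or_pos k with rfl | hk
    · exact Nat.zero_le j
    have hmod : k % b ≤ j % b := by simpa only [dig_zero] using h 0
    have hdiv : k / b ≤ j / b :=
      ih _ (Nat.div_lt_self hk hb) fun i => by simpa only [dig_succ] using h (i + 1)
    have := Nat.mul_le_mul_left b hdiv
    have := Nat.div_add_mod k b
    have := Nat.div_add_mod j b
    omega

lemma forall_dig_le_add_pow_mul_iff {b N k j q p : ℕ} (hk : k < b ^ N) (hj : j < b ^ N)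
    (hq : q < b) (hp : p < b) :
    (∀ i, dig b (k + b ^ N * q) i ≤ dig b (j + b ^ N * p) i) ↔
      q ≤ p ∧ ∀ i, dig b k i ≤ dig b j i := by
  have hlt : k + b ^ N * q < b ^ (N + 1) := by
    rw [pow_succ]; nlinarith
  constructor
  · intro h
    refine ⟨?_, fun i => ?_⟩
    · simpa only [dig_add_pow_mul_self hk hq, dig_add_pow_mul_self hj hp] using h N
    rcases lt_or_ge i N with hi | hi
    · simpa only [dig_add_pow_mul_of_lt _ _ hi] using h i
    · rw [dig_eq_zero_of_lt_pow (hk.trans_le (Nat.pow_le_pow_right (by omega) hi))]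
      exact Nat.zero_le _
  · rintro ⟨hqp, h⟩ i
    rcases lt_trichotomy i N with hi | rfl | hi
    · simpa only [dig_add_pow_mul_of_lt _ _ hi] using h i
    · rwa [dig_add_pow_mul_self hk hq, dig_add_pow_mul_self hj hp]
    · rw [dig_eq_zero_of_lt_pow (hlt.trans_le (Nat.pow_le_pow_right (by omega) hi))]
      exact Nat.zero_le _

lemma sierp_apply {b : ℕ} (hb : 1 < b) (N : ℕ) (x r : ℕ → ℚ) (j k : Fin (b ^ N)) :
    Sierp b N x r j k =
      if ∀ i, dig b k i ≤ dig b j i then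
        ∏ i ∈ Finset.range N, genBinom (x i) (r i) (dig b ((j : ℕ) - (k : ℕ)) i)
      else 0 := by
  simp only [Sierp, and_iff_right_of_imp (le_of_forall_dig_le hb)]

lemma prod_range_succ_genBinom_dig_add_pow_mul {b N m a : ℕ} (hm : m < b ^ N) (ha : a < b)
    (x r : ℕ → ℚ) :
    ∏ i ∈ Finset.range (N + 1), genBinom (x i) (r i) (dig b (m + b ^ N * a) i) =
      genBinom (x N) (r N) a * ∏ i ∈ Finset.range N, genBinom (x i) (r i) (dig b m i) := by
  rw [Finset.prod_range_succ, dig_add_pow_mul_self hm ha, mul_comm]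
  congr 1
  exact Finset.prod_congr rfl fun i hi => by
    rw [dig_add_pow_mul_of_lt _ _ (Finset.mem_range.mp hi)]

/-- The Kronecker-product recurrence
`S_{b,N+1}(x₀,…,x_N; r₀,…,r_N) = S_{b,1}(x_N, r_N) ⊗ S_{b,N}(x₀,…,x_{N-1}; r₀,…,r_{N-1})`,
where the row/column indices of the Kronecker product, `(p, j') : Fin b × Fin (b^N)`,
correspond to `p·b^N + j' : Fin (b^(N+1))`. -/
theorem sierpinski_kronecker_recurrence (b N : ℕ) (hb : 2 ≤ b) (x r : ℕ → ℚ) :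
    Sierp b (N + 1) x r =
      Matrix.reindex (finProdFinEquiv.trans (finCongr (pow_succ' b N).symm))
        (finProdFinEquiv.trans (finCongr (pow_succ' b N).symm))
        (Matrix.kroneckerMap (· * ·) (Sierp1 b (x N) (r N)) (Sierp b N x r)) := by
  set e := finProdFinEquiv.trans (finCongr (pow_succ' b N).symm)
  have he : ∀ (p : Fin b) (j : Fin (b ^ N)), (e (p, j) : ℕ) = j + b ^ N * p := fun _ _ => rfl
  ext J K
  obtain ⟨⟨p, j⟩, rfl⟩ := e.surjective J
  obtain ⟨⟨q, k⟩, rfl⟩ := e.surjective K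
  rw [Matrix.reindex_apply, Matrix.submatrix_apply, e.symm_apply_apply, e.symm_apply_apply,
    Matrix.kroneckerMap_apply, sierp_apply hb, sierp_apply hb, Sierp1, he, he,
    forall_dig_le_add_pow_mul_iff k.is_lt j.is_lt q.is_lt p.is_lt]
  by_cases hqp : (q : ℕ) ≤ p
  · by_cases hkj : ∀ i, dig b k i ≤ dig b j i
    · have hsub : (j : ℕ) + b ^ N * p - (k + b ^ N * q) = (j - k) + b ^ N * (p - q) := by
        have := Nat.mul_le_mul_left (b ^ N) hqp
        have := le_of_forall_dig_le hb hkj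
        rw [Nat.mul_sub]; omega
      rw [if_pos ⟨hqp, hkj⟩, if_pos hqp, if_pos hkj, hsub,
        prod_range_succ_genBinom_dig_add_pow_mul (by omega) (by omega)]
    · rw [if_neg fun h => hkj h.2, if_neg hkj, mul_zero]
  · rw [if_neg fun h => hqp h.1, if_neg hqp, zero_mul]
end
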